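/- Validity criterion via continuity. In the piecewise monotone setting, the φ-expansion is valid if and only if φ̄_∞ is well-defined on all of A^ℕ, the map φ̄_∞ : A^ℕ → [0,1] is continuous (A^ℕ carrying the product topology), and there exist strings x⁺, x⁻ ∈ A^ℕ with φ̄_∞(x⁺) = 1 and φ̄_∞(x⁻) = 0. -/

import Mathlib

open Set Filter Topology

/-- A piecewise monotone dynamical system on `[0,1]`: partition points
`0 = a 0 < a 1 < ⋯ < a k = 1` (`k ≥ 2`), branch intervals `I j = (a j, a (j+1))`,
on each of which `f j` is a continuous strictly monotone map into `[0,1]` with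
inverse `g j`; `inc j` records whether `f j` is increasing; the covering condition
`(⋃ᵢ Jᵢ) ∩ I j = I j` (i.e. `I j ⊆ ⋃ᵢ Jᵢ`) holds, where `J i = f i '' I i`. -/
structure PMS where
  k : ℕ
  a : ℕ → ℝ
  f : ℕ → ℝ → ℝ
  g : ℕ → ℝ → ℝ
  inc : ℕ → Bool
  two_le_k : 2 ≤ k
  a_zero : a 0 = 0
  a_last : a k = 1
  a_mono : ∀ i j, i < j → j ≤ k → a i < a j
  f_cont : ∀ j, j < k → ContinuousOn (f j) (Icc (a j) (a (j + 1)))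
  f_mono : ∀ j, j < k → inc j = true → StrictMonoOn (f j) (Icc (a j) (a (j + 1)))
  f_anti : ∀ j, j < k → inc j = false → StrictAntiOn (f j) (Icc (a j) (a (j + 1)))
  f_range : ∀ j, j < k → MapsTo (f j) (Icc (a j) (a (j + 1))) (Icc (0 : ℝ) 1)
  g_inv : ∀ j, j < k → ∀ t ∈ Icc (a j) (a (j + 1)), g j (f j t) = t
  cover : ∀ j, j < k →
    Ioo (a j) (a (j + 1)) ⊆ ⋃ i ∈ Finset.range k, f i '' Ioo (a i) (a (i + 1))

namespace PMS

/-- The open branch interval `I j = (a j, a (j+1))`. -/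
def I (P : PMS) (j : ℕ) : Set ℝ := Ioo (P.a j) (P.a (j + 1))

open Classical in
/-- The index of the branch interval containing `x` (junk value `0` if there is none). -/
noncomputable def idx (P : PMS) (x : ℝ) : ℕ :=
  if h : ∃ j, j < P.k ∧ x ∈ P.I j then h.choose else 0

open Classical in
/-- The dynamics: `T x = f j x` for `x ∈ I j` (junk value `0` on `S₀`, where `T` is
left undefined in the paper). -/
noncomputable def T (P : PMS) (x : ℝ) : ℝ :=
  if ∃ j, j < P.k ∧ x ∈ P.I j then P.f (P.idx x) x else 0

/-- `S₀ = [0,1] ∖ ⋃ⱼ I j`. -/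
def S0 (P : PMS) : Set ℝ := Icc 0 1 \ ⋃ j ∈ Finset.range P.k, P.I j

/-- The singular set `S`: points whose orbit hits `S₀`. -/
def S (P : PMS) : Set ℝ :=
  {x ∈ Icc (0 : ℝ) 1 | ∃ m, P.T^[m] x ∈ P.S0 ∧ ∀ i, i < m → P.T^[i] x ∉ P.S0}

/-- The coding map (itinerary): `(code x) n = j` iff `Tⁿ x ∈ I j` (for `x ∈ [0,1] ∖ S`). -/
noncomputable def code (P : PMS) (x : ℝ) : ℕ → ℕ := fun n => P.idx (P.T^[n] x)

/-- The map `φ̄` on `[0,k]` as a function of `j ∈ A` and `t ∈ [0,1]`, a point of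
`[j, j+1]` being written `j + t`. -/
noncomputable def phibarJ (P : PMS) (j : ℕ) (t : ℝ) : ℝ :=
  if P.inc j then
    if t ≤ P.f j (P.a j) then P.a j
    else if P.f j (P.a (j + 1)) ≤ t then P.a (j + 1)
    else P.g j t
  else
    if t ≤ P.f j (P.a (j + 1)) then P.a (j + 1)
    else if P.f j (P.a j) ≤ t then P.a j
    else P.g j t

/-- `φ̄ₙ(x) = φ̄(x₀ + φ̄(x₁ + ⋯ + φ̄(x_{n-1})⋯))`. -/
noncomputable def phibarN (P : PMS) : ℕ → (ℕ → ℕ) → ℝ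
  | 0, _ => 0
  | n + 1, x => P.phibarJ (x 0) (P.phibarN n fun i => x (i + 1))

/-- `φ̄_∞(x) = limₙ φ̄ₙ(x)` (a junk value where the limit does not exist). -/
noncomputable def phibarInf (P : PMS) (x : ℕ → ℕ) : ℝ :=
  limUnder atTop fun n => P.phibarN n x

/-- The φ-expansion is well-defined: `limₙ φ̄ₙ(x)` exists for every string `x ∈ A^ℕ`. -/
def WellDefined (P : PMS) : Prop :=
  ∀ x : ℕ → ℕ, (∀ n, x n < P.k) →
    ∃ L : ℝ, Tendsto (fun n => P.phibarN n x) atTop (𝓝 L)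

/-- The φ-expansion is valid: for every `x ∈ [0,1] ∖ S`, `limₙ φ̄ₙ(i(x)) = x`. -/
def Valid (P : PMS) : Prop :=
  ∀ x ∈ Icc (0 : ℝ) 1 \ P.S,
    Tendsto (fun n => P.phibarN n (P.code x)) atTop (𝓝 x)

end PMS


/-!
The composition `φ̄_{x₀} ∘ ⋯ ∘ φ̄_{x_{n-1}}` is continuous and monotone or antitone, so it maps
`[0,1]` into the *cylinder interval* spanned by its values at `0` and `1`. These intervals are
nested, `φ̄ₘ(x)` lies in the `n`-th one for `m ≥ n`, and a point `y ∉ S` lies in all cylinder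
intervals of its itinerary `i(y)`, because `φ̄_j` inverts `f_j` on `I_j`.

If the expansion is valid, the cylinder intervals of every string shrink to a point: a point
strictly inside all of them has the string as its itinerary, so two such points would both be
`lim φ̄ₙ(x)`. This gives the existence of `φ̄_∞` and its continuity. As `S` is countable, the
image of the compact space `A^ℕ` under `φ̄_∞` is a closed set containing a dense part of `[0,1]`,
hence it contains `0` and `1`.

Conversely, let `x = i(y)`. The string `x₀ … x_{N-1} x⁻` (resp. `x⁺`) tends to `x` as `N → ∞`,
and `φ̄_∞` maps it to the value at `0` (resp. `1`) of the `N`-fold composition. By continuity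
both endpoints of the cylinder intervals of `x` tend to `φ̄_∞(x)`, which therefore equals `y`.
-/

theorem Monotone.continuous_of_ordConnected_range {α β : Type*} [LinearOrder α]
    [TopologicalSpace α] [OrderTopology α] [LinearOrder β] [TopologicalSpace β]
    [OrderTopology β] [DenselyOrdered β] {f : α → β} (hf : Monotone f)
    (h : (range f).OrdConnected) : Continuous f :=
  continuous_subtype_val.comp <|
    Monotone.continuous_of_surjective (fun _ _ hab => hf hab) rangeFactorization_surjective

theorem Antitone.continuous_of_ordConnected_range {α β : Type*} [LinearOrder α]
    [TopologicalSpace α] [OrderTopology α] [LinearOrder β] [TopologicalSpace β]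
    [OrderTopology β] [DenselyOrdered β] {f : α → β} (hf : Antitone f)
    (h : (range f).OrdConnected) : Continuous f :=
  (hf.dual_left.continuous_of_ordConnected_range h).comp continuous_toDual

theorem Monotone.mem_uIoo_of_apply_mem_uIoo {α β : Type*} [LinearOrder α] [LinearOrder β]
    {f : α → β} (hf : Monotone f) {u v w : α} (h : f w ∈ uIoo (f u) (f v)) :
    w ∈ uIoo u v := by
  refine ⟨lt_of_not_ge fun hw => ?_, lt_of_not_ge fun hw => ?_⟩
  · exact h.1.not_ge ((hf hw).trans_eq hf.map_min)
  · exact h.2.not_ge (hf.map_max.symm.trans_le (hf hw))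

theorem Antitone.mem_uIoo_of_apply_mem_uIoo {α β : Type*} [LinearOrder α] [LinearOrder β]
    {f : α → β} (hf : Antitone f) {u v w : α} (h : f w ∈ uIoo (f u) (f v)) :
    w ∈ uIoo u v := by
  refine ⟨lt_of_not_ge fun hw => ?_, lt_of_not_ge fun hw => ?_⟩
  · exact h.2.not_ge (hf.map_min.symm.trans_le (hf hw))
  · exact h.1.not_ge ((hf hw).trans_eq hf.map_max)

theorem eq_of_forall_mem_uIcc_of_tendsto {α ι : Type*} [LinearOrder α] [TopologicalSpace α]
    [OrderClosedTopology α] {l : Filter ι} [l.NeBot] {u v : ι → α} {y L : α}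
    (hu : Tendsto u l (𝓝 L)) (hv : Tendsto v l (𝓝 L)) (hy : ∀ i, y ∈ uIcc (u i) (v i)) :
    y = L := by
  have hmin : Tendsto (fun i => min (u i) (v i)) l (𝓝 L) := by
    simpa only [min_self] using hu.min hv
  have hmax : Tendsto (fun i => max (u i) (v i)) l (𝓝 L) := by
    simpa only [max_self] using hu.max hv
  exact le_antisymm (ge_of_tendsto hmax (.of_forall fun i => (hy i).2))
    (le_of_tendsto hmin (.of_forall fun i => (hy i).1))

namespace PMS

section

variable (P : PMS)

lemma a_strictMonoOn : StrictMonoOn P.a (Iic P.k) :=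
  fun i _ j hj hij => P.a_mono i j hij hj

variable {P}

lemma a_lt_a_succ {j : ℕ} (hj : j < P.k) : P.a j < P.a (j + 1) :=
  P.a_mono j (j + 1) j.lt_succ_self hj

lemma Icc_a_subset_unit {j : ℕ} (hj : j < P.k) : Icc (P.a j) (P.a (j + 1)) ⊆ Icc 0 1 := by
  have hmono := P.a_strictMonoOn.monotoneOn
  refine Icc_subset_Icc ?_ ?_
  · simpa [P.a_zero] using hmono (mem_Iic.2 (Nat.zero_le P.k)) (mem_Iic.2 hj.le) j.zero_le
  · simpa [P.a_last] using hmono (mem_Iic.2 hj) (mem_Iic.2 le_rfl) hj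

lemma eq_of_mem_I {i j : ℕ} (hi : i < P.k) (hj : j < P.k) {z : ℝ} (hzi : z ∈ P.I i)
    (hzj : z ∈ P.I j) : i = j := by
  have key : ∀ {i j}, i < j → j < P.k → z ∈ P.I i → z ∉ P.I j := fun hij hj hzi hzj =>
    (hzi.2.trans_le (P.a_strictMonoOn.monotoneOn (mem_Iic.2 (by omega)) (mem_Iic.2 hj.le)
      hij)).not_gt hzj.1
  rcases lt_trichotomy i j with h | h | h
  · exact absurd hzj (key h hj hzi)
  · exact h
  · exact absurd hzi (key h hi hzj)

lemma idx_eq {j : ℕ} (hj : j < P.k) {z : ℝ} (hz : z ∈ P.I j) : P.idx z = j := by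
  have h : ∃ i, i < P.k ∧ z ∈ P.I i := ⟨j, hj, hz⟩
  rw [idx, dif_pos h]
  exact eq_of_mem_I h.choose_spec.1 hj h.choose_spec.2 hz

lemma T_eq {j : ℕ} (hj : j < P.k) {z : ℝ} (hz : z ∈ P.I j) : P.T z = P.f j z := by
  rw [T, if_pos ⟨j, hj, hz⟩, idx_eq hj hz]

lemma T_mem_unit {j : ℕ} (hj : j < P.k) {z : ℝ} (hz : z ∈ P.I j) : P.T z ∈ Icc 0 1 :=
  T_eq hj hz ▸ P.f_range j hj (Ioo_subset_Icc_self hz)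

lemma mem_S0_iff {z : ℝ} : z ∈ P.S0 ↔ z ∈ Icc 0 1 ∧ ∀ j < P.k, z ∉ P.I j := by
  simp [S0]

lemma mem_Icc_diff_S_iff {y : ℝ} :
    y ∈ Icc 0 1 \ P.S ↔ ∀ n, ∃ j < P.k, P.T^[n] y ∈ P.I j := by
  constructor
  · rintro ⟨hy, hyS⟩
    have hS0 : ∀ m, P.T^[m] y ∉ P.S0 := by
      classical
      intro m hm
      have hex : ∃ m, P.T^[m] y ∈ P.S0 := ⟨m, hm⟩
      exact hyS ⟨hy, Nat.find hex, Nat.find_spec hex, fun i hi => Nat.find_min hex hi⟩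
    have hunit : ∀ n, P.T^[n] y ∈ Icc 0 1 → ∃ j < P.k, P.T^[n] y ∈ P.I j := fun n hn => by
      simpa [mem_S0_iff, hn] using hS0 n
    intro n
    induction n with
    | zero => exact hunit 0 hy
    | succ n ih =>
      obtain ⟨j, hj, hI⟩ := ih
      refine hunit (n + 1) ?_
      rw [Function.iterate_succ_apply']
      exact T_mem_unit hj hI
  · intro h
    obtain ⟨j, hj, hI⟩ := h 0
    refine ⟨P.Icc_a_subset_unit hj (Ioo_subset_Icc_self hI), ?_⟩
    rintro ⟨-, m, hm, -⟩
    obtain ⟨i, hi, hIm⟩ := h m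
    exact (mem_S0_iff.1 hm).2 i hi hIm

lemma code_spec {y : ℝ} (hy : y ∈ Icc 0 1 \ P.S) (n : ℕ) :
    P.code y n < P.k ∧ P.T^[n] y ∈ P.I (P.code y n) := by
  obtain ⟨j, hj, hI⟩ := mem_Icc_diff_S_iff.1 hy n
  rw [code, idx_eq hj hI]
  exact ⟨hj, hI⟩

lemma code_eq {x : ℕ → ℕ} (hx : ∀ n, x n < P.k) {y : ℝ} (hy : ∀ n, P.T^[n] y ∈ P.I (x n)) :
    P.code y = x :=
  funext fun n => idx_eq (hx n) (hy n)

lemma S0_subset_range_a : P.S0 ⊆ range P.a := by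
  intro z hz
  obtain ⟨⟨hz0, hz1⟩, hzI⟩ := mem_S0_iff.1 hz
  suffices ∀ n ≤ P.k, z ≤ P.a n → z ∈ range P.a from this P.k le_rfl (P.a_last ▸ hz1)
  intro n
  induction n with
  | zero => exact fun _ h => ⟨0, le_antisymm (P.a_zero ▸ hz0) (P.a_zero ▸ h)⟩
  | succ n ih =>
    intro hn hzn
    rcases le_or_gt z (P.a n) with h | h
    · exact ih (by omega) h
    rcases hzn.eq_or_lt with h' | h'
    · exact ⟨n + 1, h'.symm⟩
    · exact absurd ⟨h, h'⟩ (hzI n (by omega))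

lemma f_injOn_I {j : ℕ} (hj : j < P.k) : InjOn (P.f j) (P.I j) := by
  cases hb : P.inc j
  · exact (P.f_anti j hj hb).injOn.mono Ioo_subset_Icc_self
  · exact (P.f_mono j hj hb).injOn.mono Ioo_subset_Icc_self

variable (P) in
def firstHit (m : ℕ) : Set ℝ :=
  {y ∈ Icc (0 : ℝ) 1 | P.T^[m] y ∈ P.S0 ∧ ∀ i < m, P.T^[i] y ∉ P.S0}

lemma firstHit_succ_subset (m : ℕ) :
    P.firstHit (m + 1) ⊆ ⋃ j ∈ Finset.range P.k, P.I j ∩ P.f j ⁻¹' P.firstHit m := by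
  rintro y ⟨hy, hm, hlt⟩
  obtain ⟨j, hj, hI⟩ : ∃ j < P.k, y ∈ P.I j := by
    simpa [mem_S0_iff, hy] using hlt 0 m.succ_pos
  simp only [mem_iUnion, Finset.mem_range, exists_prop]
  refine ⟨j, hj, hI, P.f_range j hj (Ioo_subset_Icc_self hI), ?_, fun i hi => ?_⟩
  · rwa [← T_eq hj hI, ← Function.iterate_succ_apply]
  · rw [← T_eq hj hI, ← Function.iterate_succ_apply]
    exact hlt (i + 1) (by omega)

variable (P) in
lemma S_countable : P.S.Countable := by
  have hS : P.S = ⋃ m, P.firstHit m := by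
    ext y
    simp [S, firstHit]
  have hhit : ∀ m, (P.firstHit m).Countable := by
    intro m
    induction m with
    | zero =>
      exact ((countable_range P.a).mono S0_subset_range_a).mono fun y hy => by
        simpa using hy.2.1
    | succ m ih =>
      refine .mono (firstHit_succ_subset m) (.biUnion (Finset.range P.k).countable_toSet ?_)
      intro j hj
      exact MapsTo.countable_of_injOn (f := P.f j) (fun z hz => hz.2)
        ((f_injOn_I (Finset.mem_range.1 hj)).mono inter_subset_left) ih
  rw [hS]
  exact countable_iUnion hhit

end

section

variable {P : PMS} {j : ℕ}

lemma g_mem_and_f_g (hj : j < P.k) {t : ℝ}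
    (ht : t ∈ uIcc (P.f j (P.a j)) (P.f j (P.a (j + 1)))) :
    P.g j t ∈ Icc (P.a j) (P.a (j + 1)) ∧ P.f j (P.g j t) = t := by
  have hab := (a_lt_a_succ hj).le
  obtain ⟨s, hs, rfl⟩ :=
    intermediate_value_uIcc (by simpa [uIcc_of_le hab] using P.f_cont j hj) ht
  rw [uIcc_of_le hab] at hs
  rw [P.g_inv j hj s hs]
  exact ⟨hs, rfl⟩

lemma phibarJ_mem (hj : j < P.k) (t : ℝ) : P.phibarJ j t ∈ Icc (P.a j) (P.a (j + 1)) := by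
  have hab := (a_lt_a_succ hj).le
  unfold phibarJ
  split_ifs with _ h₁ h₂ h₁ h₂
  · exact left_mem_Icc.2 hab
  · exact right_mem_Icc.2 hab
  · exact (g_mem_and_f_g hj (mem_uIcc_of_le (not_le.1 h₁).le (not_le.1 h₂).le)).1
  · exact right_mem_Icc.2 hab
  · exact left_mem_Icc.2 hab
  · exact (g_mem_and_f_g hj (mem_uIcc_of_ge (not_le.1 h₁).le (not_le.1 h₂).le)).1

lemma phibarJ_mem_unit (hj : j < P.k) (t : ℝ) : P.phibarJ j t ∈ Icc 0 1 :=
  Icc_a_subset_unit hj (phibarJ_mem hj t)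

lemma f_a_lt_f_a_succ (hj : j < P.k) (hi : P.inc j = true) :
    P.f j (P.a j) < P.f j (P.a (j + 1)) :=
  P.f_mono j hj hi (left_mem_Icc.2 (a_lt_a_succ hj).le) (right_mem_Icc.2 (a_lt_a_succ hj).le)
    (a_lt_a_succ hj)

lemma f_a_succ_lt_f_a (hj : j < P.k) (hi : P.inc j = false) :
    P.f j (P.a (j + 1)) < P.f j (P.a j) :=
  P.f_anti j hj hi (left_mem_Icc.2 (a_lt_a_succ hj).le) (right_mem_Icc.2 (a_lt_a_succ hj).le)
    (a_lt_a_succ hj)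

lemma f_phibarJ_of_inc (hj : j < P.k) (hi : P.inc j = true) (t : ℝ) :
    P.f j (P.phibarJ j t) = max (P.f j (P.a j)) (min (P.f j (P.a (j + 1))) t) := by
  have hlt := f_a_lt_f_a_succ hj hi
  simp only [phibarJ, hi, if_true]
  split_ifs with h₁ h₂
  · exact (max_eq_left ((min_le_right _ _).trans h₁)).symm
  · rw [min_eq_left h₂, max_eq_right hlt.le]
  · rw [min_eq_right (not_le.1 h₂).le, max_eq_right (not_le.1 h₁).le]
    exact (g_mem_and_f_g hj (mem_uIcc_of_le (not_le.1 h₁).le (not_le.1 h₂).le)).2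

lemma f_phibarJ_of_dec (hj : j < P.k) (hi : P.inc j = false) (t : ℝ) :
    P.f j (P.phibarJ j t) = max (P.f j (P.a (j + 1))) (min (P.f j (P.a j)) t) := by
  have hlt := f_a_succ_lt_f_a hj hi
  simp only [phibarJ, hi, Bool.false_eq_true, if_false]
  split_ifs with h₁ h₂
  · exact (max_eq_left ((min_le_right _ _).trans h₁)).symm
  · rw [min_eq_left h₂, max_eq_right hlt.le]
  · rw [min_eq_right (not_le.1 h₂).le, max_eq_right (not_le.1 h₁).le]
    exact (g_mem_and_f_g hj (mem_uIcc_of_ge (not_le.1 h₁).le (not_le.1 h₂).le)).2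

lemma phibarJ_monotone (hj : j < P.k) (hi : P.inc j = true) : Monotone (P.phibarJ j) := by
  intro t₁ t₂ ht
  rw [← (P.f_mono j hj hi).le_iff_le (phibarJ_mem hj t₁) (phibarJ_mem hj t₂),
    f_phibarJ_of_inc hj hi, f_phibarJ_of_inc hj hi]
  gcongr

lemma phibarJ_antitone (hj : j < P.k) (hi : P.inc j = false) : Antitone (P.phibarJ j) := by
  intro t₁ t₂ ht
  rw [← (P.f_anti j hj hi).le_iff_ge (phibarJ_mem hj t₁) (phibarJ_mem hj t₂),
    f_phibarJ_of_dec hj hi, f_phibarJ_of_dec hj hi]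
  gcongr

lemma phibarJ_monotone_or_antitone (hj : j < P.k) :
    Monotone (P.phibarJ j) ∨ Antitone (P.phibarJ j) := by
  cases hi : P.inc j
  · exact .inr (phibarJ_antitone hj hi)
  · exact .inl (phibarJ_monotone hj hi)

lemma phibarJ_f (hj : j < P.k) {z : ℝ} (hz : z ∈ Icc (P.a j) (P.a (j + 1))) :
    P.phibarJ j (P.f j z) = z := by
  have ha := left_mem_Icc.2 (hz.1.trans hz.2)
  have hb := right_mem_Icc.2 (hz.1.trans hz.2)
  cases hi : P.inc j
  · have hanti := P.f_anti j hj hi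
    refine hanti.injOn (phibarJ_mem hj _) hz ?_
    rw [f_phibarJ_of_dec hj hi, min_eq_right (hanti.antitoneOn ha hz hz.1),
      max_eq_right (hanti.antitoneOn hz hb hz.2)]
  · have hmono := P.f_mono j hj hi
    refine hmono.injOn (phibarJ_mem hj _) hz ?_
    rw [f_phibarJ_of_inc hj hi, min_eq_right (hmono.monotoneOn hz hb hz.2),
      max_eq_right (hmono.monotoneOn ha hz hz.1)]

lemma range_phibarJ (hj : j < P.k) : range (P.phibarJ j) = Icc (P.a j) (P.a (j + 1)) :=
  (range_subset_iff.2 (phibarJ_mem hj)).antisymm fun z hz => ⟨P.f j z, phibarJ_f hj hz⟩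

lemma phibarJ_continuous (hj : j < P.k) : Continuous (P.phibarJ j) := by
  have hconn : (range (P.phibarJ j)).OrdConnected := range_phibarJ hj ▸ ordConnected_Icc
  rcases phibarJ_monotone_or_antitone hj with hmono | hanti
  · exact hmono.continuous_of_ordConnected_range hconn
  · exact hanti.continuous_of_ordConnected_range hconn

end

section

/-- `phibarComp n x = φ̄_{x 0} ∘ ⋯ ∘ φ̄_{x (n-1)}`. -/
noncomputable def phibarComp (P : PMS) : ℕ → (ℕ → ℕ) → ℝ → ℝ
  | 0, _, t => t
  | n + 1, x, t => P.phibarJ (x 0) (P.phibarComp n (fun i => x (i + 1)) t)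

variable {P : PMS} {x w : ℕ → ℕ}

lemma phibarN_eq_phibarComp (n : ℕ) (x : ℕ → ℕ) : P.phibarN n x = P.phibarComp n x 0 := by
  induction n generalizing x with
  | zero => rfl
  | succ n ih => rw [phibarN, phibarComp, ih]

lemma phibarComp_succ' (n : ℕ) (x : ℕ → ℕ) (t : ℝ) :
    P.phibarComp (n + 1) x t = P.phibarComp n x (P.phibarJ (x n) t) := by
  induction n generalizing x with
  | zero => rfl
  | succ n ih => rw [phibarComp, ih, phibarComp]

lemma phibarComp_congr {n : ℕ} (h : ∀ i < n, x i = w i) : P.phibarComp n x = P.phibarComp n w := by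
  induction n generalizing x w with
  | zero => rfl
  | succ n ih =>
    funext t
    rw [phibarComp, phibarComp, h 0 n.succ_pos, ih fun i hi => h (i + 1) (by omega)]

lemma phibarN_add (n m : ℕ) (x : ℕ → ℕ) :
    P.phibarN (n + m) x = P.phibarComp n x (P.phibarN m fun i => x (n + i)) := by
  induction n generalizing x with
  | zero => simp [phibarComp]
  | succ n ih =>
    rw [Nat.add_right_comm, phibarN, ih, phibarComp]
    simp only [Nat.add_right_comm n 1]

lemma phibarN_mem_unit (hx : ∀ i, x i < P.k) (n : ℕ) : P.phibarN n x ∈ Icc 0 1 := by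
  cases n with
  | zero => exact left_mem_Icc.2 zero_le_one
  | succ n => exact phibarJ_mem_unit (hx 0) _

lemma phibarComp_monotone_or_antitone (hx : ∀ i, x i < P.k) (n : ℕ) :
    Monotone (P.phibarComp n x) ∨ Antitone (P.phibarComp n x) := by
  induction n generalizing x with
  | zero => exact .inl monotone_id
  | succ n ih =>
    change Monotone (P.phibarJ (x 0) ∘ P.phibarComp n (fun i => x (i + 1))) ∨
      Antitone (P.phibarJ (x 0) ∘ P.phibarComp n (fun i => x (i + 1)))
    rcases phibarJ_monotone_or_antitone (hx 0) with h | h <;>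
      rcases ih fun i => hx (i + 1) with h' | h'
    exacts [.inl (h.comp h'), .inr (h.comp_antitone h'), .inr (h.comp_monotone h'),
      .inl (h.comp h')]

lemma phibarComp_continuous (hx : ∀ i, x i < P.k) (n : ℕ) : Continuous (P.phibarComp n x) := by
  induction n generalizing x with
  | zero => exact continuous_id
  | succ n ih => exact (phibarJ_continuous (hx 0)).comp (ih fun i => hx (i + 1))

def cylInterval (P : PMS) (n : ℕ) (x : ℕ → ℕ) : Set ℝ :=
  uIcc (P.phibarComp n x 0) (P.phibarComp n x 1)

lemma phibarComp_mem_cylInterval (hx : ∀ i, x i < P.k) (n : ℕ) {t : ℝ} (ht : t ∈ Icc 0 1) :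
    P.phibarComp n x t ∈ P.cylInterval n x := by
  rw [← uIcc_of_le zero_le_one] at ht
  rcases phibarComp_monotone_or_antitone hx n with h | h
  exacts [h.mapsTo_uIcc ht, h.mapsTo_uIcc ht]

lemma cylInterval_succ_subset (hx : ∀ i, x i < P.k) (n : ℕ) :
    P.cylInterval (n + 1) x ⊆ P.cylInterval n x := by
  refine uIcc_subset_uIcc ?_ ?_ <;> rw [phibarComp_succ'] <;>
    exact phibarComp_mem_cylInterval hx n (phibarJ_mem_unit (hx n) _)

lemma phibarN_mem_cylInterval (hx : ∀ i, x i < P.k) {n m : ℕ} (hnm : n ≤ m) :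
    P.phibarN m x ∈ P.cylInterval n x := by
  obtain ⟨m, rfl⟩ := Nat.exists_eq_add_of_le hnm
  rw [phibarN_add]
  exact phibarComp_mem_cylInterval hx n (phibarN_mem_unit (fun i => hx (n + i)) m)

lemma cylInterval_eq_of_mem_cylinder {n : ℕ} (h : w ∈ PiNat.cylinder x n) :
    P.cylInterval n w = P.cylInterval n x := by
  rw [cylInterval, cylInterval, phibarComp_congr h]

lemma phibarComp_code_iterate {y : ℝ} (hy : y ∈ Icc 0 1 \ P.S) (n : ℕ) :
    P.phibarComp n (P.code y) (P.T^[n] y) = y := by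
  induction n with
  | zero => rfl
  | succ n ih =>
    obtain ⟨hj, hI⟩ := code_spec hy n
    rw [phibarComp_succ', Function.iterate_succ_apply', T_eq hj hI,
      phibarJ_f hj (Ioo_subset_Icc_self hI), ih]

lemma mem_cylInterval_code {y : ℝ} (hy : y ∈ Icc 0 1 \ P.S) (n : ℕ) :
    y ∈ P.cylInterval n (P.code y) := by
  have hx : ∀ i, P.code y i < P.k := fun i => (code_spec hy i).1
  have hTy : P.T^[n] y ∈ Icc 0 1 := by
    obtain ⟨hj, hI⟩ := code_spec hy n
    exact Icc_a_subset_unit hj (Ioo_subset_Icc_self hI)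
  simpa only [phibarComp_code_iterate hy n] using phibarComp_mem_cylInterval hx n hTy

end

section

variable {P : PMS} {x : ℕ → ℕ}

lemma mem_I_and_T_mem_uIoo (hx : ∀ i, x i < P.k) {q : ℕ} {y : ℝ}
    (hy : y ∈ uIoo (P.phibarComp (q + 1) x 0) (P.phibarComp (q + 1) x 1)) :
    y ∈ P.I (x 0) ∧ P.T y ∈ uIoo (P.phibarComp q (fun i => x (i + 1)) 0)
      (P.phibarComp q (fun i => x (i + 1)) 1) := by
  set u := P.phibarComp q (fun i => x (i + 1)) 0
  set v := P.phibarComp q (fun i => x (i + 1)) 1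
  have hy' : y ∈ uIoo (P.phibarJ (x 0) u) (P.phibarJ (x 0) v) := hy
  have hu := phibarJ_mem (hx 0) u
  have hv := phibarJ_mem (hx 0) v
  have hI : y ∈ P.I (x 0) := Ioo_subset_Ioo (le_min hu.1 hv.1) (max_le hu.2 hv.2) hy'
  refine ⟨hI, ?_⟩
  rw [T_eq (hx 0) hI]
  rw [← phibarJ_f (hx 0) (Ioo_subset_Icc_self hI)] at hy'
  rcases phibarJ_monotone_or_antitone (hx 0) with h | h
  exacts [h.mem_uIoo_of_apply_mem_uIoo hy', h.mem_uIoo_of_apply_mem_uIoo hy']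

lemma iterate_mem_I_of_forall_mem_uIoo (hx : ∀ i, x i < P.k) {y : ℝ}
    (hy : ∀ n, y ∈ uIoo (P.phibarComp n x 0) (P.phibarComp n x 1)) (n : ℕ) :
    P.T^[n] y ∈ P.I (x n) := by
  induction n generalizing x y with
  | zero => exact (mem_I_and_T_mem_uIoo hx (hy 1)).1
  | succ n ih =>
    rw [Function.iterate_succ_apply]
    exact ih (fun i => hx (i + 1)) fun q => (mem_I_and_T_mem_uIoo hx (hy (q + 1))).2

/-- A point strictly inside all cylinder intervals of `x` has itinerary `x`, so by validity it
is `lim φ̄ₙ(x)`. -/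
lemma eq_of_forall_mem_uIoo (hval : P.Valid) (hx : ∀ i, x i < P.k) {y y' : ℝ}
    (hy : ∀ n, y ∈ uIoo (P.phibarComp n x 0) (P.phibarComp n x 1))
    (hy' : ∀ n, y' ∈ uIoo (P.phibarComp n x 0) (P.phibarComp n x 1)) : y = y' := by
  have key : ∀ z, (∀ n, z ∈ uIoo (P.phibarComp n x 0) (P.phibarComp n x 1)) →
      Tendsto (fun n => P.phibarN n x) atTop (𝓝 z) := by
    intro z hz
    have horb := iterate_mem_I_of_forall_mem_uIoo hx hz
    have hmem : z ∈ Icc 0 1 \ P.S := mem_Icc_diff_S_iff.2 fun n => ⟨x n, hx n, horb n⟩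
    simpa only [code_eq hx horb] using hval z hmem
  exact tendsto_nhds_unique (key y hy) (key y' hy')

lemma exists_tendsto_cylInterval (hval : P.Valid) (hx : ∀ i, x i < P.k) :
    ∃ L, Tendsto (P.cylInterval · x) atTop (𝓝 L).smallSets := by
  set lo := fun n => min (P.phibarComp n x 0) (P.phibarComp n x 1)
  set hi := fun n => max (P.phibarComp n x 0) (P.phibarComp n x 1)
  have hlo : Monotone lo := monotone_nat_of_le_succ fun n =>
    (uIcc_subset_uIcc_iff_le.1 (cylInterval_succ_subset hx n)).1
  have hhi : Antitone hi := antitone_nat_of_succ_le fun n =>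
    (uIcc_subset_uIcc_iff_le.1 (cylInterval_succ_subset hx n)).2
  have hle : ∀ n, lo n ≤ hi n := fun _ => min_le_max
  have hlo_lim := tendsto_atTop_ciSup hlo
    ⟨hi 0, forall_mem_range.2 fun n => (hle n).trans (hhi n.zero_le)⟩
  have hhi_lim := tendsto_atTop_ciInf hhi
    ⟨lo 0, forall_mem_range.2 fun n => (hlo n.zero_le).trans (hle n)⟩
  set c := ⨆ n, lo n
  set d := ⨅ n, hi n
  have hinside : ∀ z, c < z → z < d → ∀ n, z ∈ uIoo (P.phibarComp n x 0) (P.phibarComp n x 1) :=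
    fun z hcz hzd n => ⟨(hlo.ge_of_tendsto hlo_lim n).trans_lt hcz,
      hzd.trans_le (hhi.le_of_tendsto hhi_lim n)⟩
  have hcd : c = d := by
    refine (le_of_tendsto_of_tendsto' hlo_lim hhi_lim hle).antisymm (not_lt.1 fun hlt => ?_)
    obtain ⟨y, hcy, hyd⟩ := exists_between hlt
    obtain ⟨y', hyy', hy'd⟩ := exists_between hyd
    exact hyy'.ne (eq_of_forall_mem_uIoo hval hx (hinside y hcy (hyy'.trans hy'd))
      (hinside y' (hcy.trans hyy') hy'd))
  exact ⟨c, hlo_lim.Icc (hcd ▸ hhi_lim)⟩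

lemma tendsto_phibarN_of_tendsto_cylInterval (hx : ∀ i, x i < P.k) {L : ℝ}
    (h : Tendsto (P.cylInterval · x) atTop (𝓝 L).smallSets) :
    Tendsto (fun n => P.phibarN n x) atTop (𝓝 L) :=
  h.of_smallSets (.of_forall fun _ => phibarN_mem_cylInterval hx le_rfl)

lemma wellDefined_of_valid (hval : P.Valid) : P.WellDefined := fun _ hx =>
  (exists_tendsto_cylInterval hval hx).imp fun _ => tendsto_phibarN_of_tendsto_cylInterval hx

lemma tendsto_cylInterval_of_valid (hval : P.Valid) (hx : ∀ i, x i < P.k) :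
    Tendsto (P.cylInterval · x) atTop (𝓝 (P.phibarInf x)).smallSets := by
  obtain ⟨L, hL⟩ := exists_tendsto_cylInterval hval hx
  rwa [phibarInf, (tendsto_phibarN_of_tendsto_cylInterval hx hL).limUnder_eq]

lemma phibarInf_mem_cylInterval_of_valid (hval : P.Valid) {w : ℕ → ℕ} (hw : ∀ i, w i < P.k)
    {n : ℕ} (hwx : w ∈ PiNat.cylinder x n) : P.phibarInf w ∈ P.cylInterval n x := by
  rw [← cylInterval_eq_of_mem_cylinder hwx]
  exact isClosed_Icc.mem_of_tendsto
    (tendsto_phibarN_of_tendsto_cylInterval hw (tendsto_cylInterval_of_valid hval hw))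
    (eventually_atTop.2 ⟨n, fun m hm => phibarN_mem_cylInterval hw hm⟩)

lemma continuousOn_phibarInf_of_valid (hval : P.Valid) :
    ContinuousOn P.phibarInf {x : ℕ → ℕ | ∀ n, x n < P.k} := by
  intro x hx s hs
  obtain ⟨N, hN⟩ := (tendsto_smallSets_iff.1 (tendsto_cylInterval_of_valid hval hx) s hs).exists
  refine mem_map.2 ?_
  filter_upwards [mem_nhdsWithin_of_mem_nhds ((PiNat.isOpen_cylinder _ x N).mem_nhds
    (PiNat.self_mem_cylinder x N)), self_mem_nhdsWithin] with w hwx hw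
  exact hN (phibarInf_mem_cylInterval_of_valid hval hw hwx)

end

section

variable {P : PMS}

lemma Icc_subset_image_phibarInf (hval : P.Valid) :
    Icc 0 1 ⊆ P.phibarInf '' {x : ℕ → ℕ | ∀ n, x n < P.k} := by
  have hK : IsCompact {x : ℕ → ℕ | ∀ n, x n < P.k} :=
    isCompact_pi_infinite fun _ => (finite_Iio P.k).isCompact
  have hclosed := (hK.image_of_continuousOn (continuousOn_phibarInf_of_valid hval)).isClosed
  have hsub : Ioo 0 1 ∩ P.Sᶜ ⊆ P.phibarInf '' {x : ℕ → ℕ | ∀ n, x n < P.k} := by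
    rintro y ⟨hy, hyS⟩
    have hy' : y ∈ Icc 0 1 \ P.S := ⟨Ioo_subset_Icc_self hy, hyS⟩
    exact ⟨P.code y, fun n => (code_spec hy' n).1, (hval y hy').limUnder_eq⟩
  calc Icc (0 : ℝ) 1 = closure (Ioo 0 1) := (closure_Ioo zero_ne_one).symm
    _ ⊆ closure (Ioo 0 1 ∩ P.Sᶜ) := closure_minimal
        (((S_countable P).dense_compl ℝ).open_subset_closure_inter isOpen_Ioo) isClosed_closure
    _ ⊆ _ := closure_minimal hsub hclosed

lemma exists_tendsto_phibarN_of_valid (hval : P.Valid) {t : ℝ} (ht : t ∈ Icc 0 1) :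
    ∃ x : ℕ → ℕ, (∀ n, x n < P.k) ∧ Tendsto (fun n => P.phibarN n x) atTop (𝓝 t) := by
  obtain ⟨x, hx, rfl⟩ := Icc_subset_image_phibarInf hval ht
  exact ⟨x, hx, tendsto_phibarN_of_tendsto_cylInterval hx (tendsto_cylInterval_of_valid hval hx)⟩

def splice (N : ℕ) (x w : ℕ → ℕ) : ℕ → ℕ := fun i => if i < N then x i else w (i - N)

lemma tendsto_splice (x w : ℕ → ℕ) : Tendsto (fun N => splice N x w) atTop (𝓝 x) :=
  tendsto_pi_nhds.2 fun i => tendsto_const_nhds.congr'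
    (eventually_atTop.2 ⟨i + 1, fun _ hN => (if_pos (by omega)).symm⟩)

variable {x w : ℕ → ℕ}

lemma phibarN_add_splice (N q : ℕ) :
    P.phibarN (N + q) (splice N x w) = P.phibarComp N x (P.phibarN q w) := by
  rw [phibarN_add, phibarComp_congr (x := splice N x w) (w := x) fun i hi => if_pos hi]
  congr 2
  funext i
  simp [splice]

lemma phibarInf_splice (hx : ∀ i, x i < P.k) {t : ℝ}
    (hw : Tendsto (fun n => P.phibarN n w) atTop (𝓝 t)) (N : ℕ) :
    P.phibarInf (splice N x w) = P.phibarComp N x t := by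
  refine Tendsto.limUnder_eq ((tendsto_add_atTop_iff_nat N).1 ?_)
  simpa only [add_comm _ N, phibarN_add_splice, Function.comp_def] using
    ((phibarComp_continuous hx N).tendsto t).comp hw

/-- `phibarComp N x t` is `φ̄_∞` of the string `splice N x w`, which tends to `x`. -/
lemma tendsto_phibarComp_of_continuousOn
    (hcont : ContinuousOn P.phibarInf {x : ℕ → ℕ | ∀ n, x n < P.k})
    (hx : ∀ i, x i < P.k) (hw : ∀ i, w i < P.k) {t : ℝ}
    (hwt : Tendsto (fun n => P.phibarN n w) atTop (𝓝 t)) :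
    Tendsto (fun N => P.phibarComp N x t) atTop (𝓝 (P.phibarInf x)) := by
  have hsplice : Tendsto (fun N => splice N x w) atTop (𝓝[{x | ∀ n, x n < P.k}] x) :=
    tendsto_nhdsWithin_iff.2 ⟨tendsto_splice x w, .of_forall fun N i => by
      unfold splice
      split_ifs
      exacts [hx i, hw _]⟩
  exact ((hcont x hx).tendsto.comp hsplice).congr (phibarInf_splice hx hwt)

lemma valid_of_continuousOn (hcont : ContinuousOn P.phibarInf {x : ℕ → ℕ | ∀ n, x n < P.k})
    (hp : ∃ xp : ℕ → ℕ, (∀ n, xp n < P.k) ∧ Tendsto (fun n => P.phibarN n xp) atTop (𝓝 1))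
    (hm : ∃ xm : ℕ → ℕ, (∀ n, xm n < P.k) ∧ Tendsto (fun n => P.phibarN n xm) atTop (𝓝 0)) :
    P.Valid := by
  obtain ⟨xp, hxp, hxp1⟩ := hp
  obtain ⟨xm, hxm, hxm0⟩ := hm
  intro y hy
  have hx : ∀ n, P.code y n < P.k := fun n => (code_spec hy n).1
  have h0 := tendsto_phibarComp_of_continuousOn hcont hx hxm hxm0
  have h1 := tendsto_phibarComp_of_continuousOn hcont hx hxp hxp1
  rw [← eq_of_forall_mem_uIcc_of_tendsto h0 h1 (mem_cylInterval_code hy)] at h0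
  simpa only [phibarN_eq_phibarComp] using h0

end

end PMS

/-- **Validity criterion via continuity.** In the piecewise monotone setting, the
φ-expansion is valid if and only if `φ̄_∞` is well-defined on all of `A^ℕ`, the map
`φ̄_∞ : A^ℕ → [0,1]` is continuous (`A^ℕ` carrying the product topology), and there
exist strings `x⁺, x⁻ ∈ A^ℕ` with `φ̄_∞(x⁺) = 1` and `φ̄_∞(x⁻) = 0`. -/
theorem validity_iff_continuous (P : PMS) :
    P.Valid ↔
      (P.WellDefined ∧
        ContinuousOn P.phibarInf {x : ℕ → ℕ | ∀ n, x n < P.k} ∧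
        (∃ xp : ℕ → ℕ, (∀ n, xp n < P.k) ∧
          Filter.Tendsto (fun n => P.phibarN n xp) Filter.atTop (nhds 1)) ∧
        (∃ xm : ℕ → ℕ, (∀ n, xm n < P.k) ∧
          Filter.Tendsto (fun n => P.phibarN n xm) Filter.atTop (nhds 0))) := by
  constructor
  · intro hval
    exact ⟨PMS.wellDefined_of_valid hval, PMS.continuousOn_phibarInf_of_valid hval,
      PMS.exists_tendsto_phibarN_of_valid hval (right_mem_Icc.2 zero_le_one),
      PMS.exists_tendsto_phibarN_of_valid hval (left_mem_Icc.2 zero_le_one)⟩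
  · rintro ⟨-, hcont, hp, hm⟩
    exact PMS.valid_of_continuousOn hcont hp hm
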